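/- arXiv:0904.2958 — 2 statements merged into one kernel-verified Lean document; each statement's English description precedes it below -/
import Mathlib

section
/- For any b ∈ (0,1] and any k ≥ 1, the 2k-th moment m_{2k}(γ_T(b)) = (2−b)^{−k} Σ_{π ∈ P₂(2k)} ∫_{[0,1]×[−1,1]^k} ∏_{j=1}^{2k} I_{[0,1]}(x_0 + b Σ_{i=1}^j ε_π(i) x_{π(i)}) dx_0 dx_1 ⋯ dx_k satisfies the bound m_{2k}(γ_T(b)) ≤ (2/(2−b))^k (2k−1)!!. -/
open MeasureTheory Finset

/-- A pair partition of `{1,…,2k}` encoded as the block-index map `p : Fin (2k) → Fin k`: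
every block (fiber) has exactly two elements, and blocks are numbered in the order of
their least elements (restricted growth condition). -/
def IsPairPartition (k : ℕ) (p : Fin (2 * k) → Fin k) : Prop :=
  (∀ m : Fin k, (Finset.univ.filter fun i => p i = m).card = 2) ∧
  (∀ i : Fin (2 * k), ∀ m : Fin k, m < p i → ∃ i', i' < i ∧ p i' = m)

instance (k : ℕ) : DecidablePred (IsPairPartition k) := fun p => by
  unfold IsPairPartition; infer_instance

/-- `ε_π(i) = 1` if `i` is the least element of its block, and `-1` otherwise. -/
def epsSign (k : ℕ) (p : Fin (2 * k) → Fin k) (i : Fin (2 * k)) : ℝ :=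
  if ∃ i', i' < i ∧ p i' = p i then -1 else 1

namespace ToeplitzAux

variable {k : ℕ} {p q : Fin (2 * k) → Fin k}

def fib (p : Fin (2 * k) → Fin k) (m : Fin k) : Finset (Fin (2 * k)) :=
  Finset.univ.filter fun i => p i = m

def Sm (p : Fin (2 * k) → Fin k) (m : Fin k) : Finset (Fin (2 * k)) :=
  Finset.univ.filter fun i => m ≤ p i

lemma fib_subset_Sm (p : Fin (2 * k) → Fin k) (m : Fin k) : fib p m ⊆ Sm p m := by
  intro i hi
  simp only [fib, Sm, mem_filter, mem_univ, true_and] at *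
  exact hi ▸ le_refl m

lemma fib_nonempty (hp : IsPairPartition k p) (m : Fin k) : (fib p m).Nonempty := by
  rw [← Finset.card_pos, fib, hp.1 m]; norm_num

lemma Sm_nonempty (hp : IsPairPartition k p) (m : Fin k) : (Sm p m).Nonempty := by
  obtain ⟨i, hi⟩ := fib_nonempty hp m
  exact ⟨i, fib_subset_Sm p m hi⟩

def lm (hp : IsPairPartition k p) (m : Fin k) : Fin (2 * k) :=
  (Sm p m).min' (Sm_nonempty hp m)

def gm (hp : IsPairPartition k p) (m : Fin k) : Fin (2 * k) :=
  (fib p m).max' (fib_nonempty hp m)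

lemma p_lm (hp : IsPairPartition k p) (m : Fin k) : p (lm hp m) = m := by
  have h1 : lm hp m ∈ Sm p m := Finset.min'_mem _ _
  have h2 : m ≤ p (lm hp m) := by simpa [Sm] using h1
  by_contra hne
  have hlt : m < p (lm hp m) := lt_of_le_of_ne h2 (fun h => hne h.symm)
  obtain ⟨i', hi', hpi'⟩ := hp.2 _ m hlt
  have hmem : i' ∈ Sm p m := by simp [Sm, hpi']
  exact absurd hi' (not_lt.mpr (Finset.min'_le _ _ hmem))

lemma lm_mem_fib (hp : IsPairPartition k p) (m : Fin k) : lm hp m ∈ fib p m := by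
  simp [fib, p_lm hp m]

lemma gm_mem_fib (hp : IsPairPartition k p) (m : Fin k) : gm hp m ∈ fib p m :=
  Finset.max'_mem _ _

lemma lm_lt_gm (hp : IsPairPartition k p) (m : Fin k) : lm hp m < gm hp m := by
  obtain ⟨a, b, hab, hfib⟩ := Finset.card_eq_two.mp (hp.1 m)
  have hfib' : fib p m = {a, b} := hfib
  have ha : a ∈ fib p m := by rw [hfib']; simp
  have hb : b ∈ fib p m := by rw [hfib']; simp
  have h1 : lm hp m ≤ a := Finset.min'_le _ _ (fib_subset_Sm p m ha)
  have h2 : lm hp m ≤ b := Finset.min'_le _ _ (fib_subset_Sm p m hb)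
  have h3 : a ≤ gm hp m := Finset.le_max' _ _ ha
  have h4 : b ≤ gm hp m := Finset.le_max' _ _ hb
  rcases hab.lt_or_gt with h | h
  · exact h1.trans_lt (h.trans_le h4)
  · exact h2.trans_lt (h.trans_le h3)

lemma card_Sm (hp : IsPairPartition k p) (m : Fin k) : (Sm p m).card = 2 * (k - m.val) := by
  rw [Finset.card_eq_sum_card_fiberwise (f := p) (t := Finset.Ici m)
    (fun i hi => by simpa [Sm] using hi)]
  have hstep : ∀ m' ∈ Finset.Ici m, ((Sm p m).filter fun i => p i = m').card = 2 := by
    intro m' hm'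
    have : (Sm p m).filter (fun i => p i = m') = fib p m' := by
      ext i
      simp only [Sm, fib, mem_filter, mem_univ, true_and]
      constructor
      · exact fun h => h.2
      · exact fun h => ⟨h ▸ Finset.mem_Ici.mp hm', h⟩
    rw [this]; exact hp.1 m'
  rw [Finset.sum_congr rfl hstep, Finset.sum_const, smul_eq_mul, Fin.card_Ici, mul_comm]

def rank (hp : IsPairPartition k p) (m : Fin k) : ℕ :=
  (((Sm p m).erase (lm hp m)).filter (· < gm hp m)).card

lemma rank_lt (hp : IsPairPartition k p) (m : Fin k) :
    rank hp m < 2 * (k - 1 - m.val) + 1 := by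
  have hgmem : gm hp m ∈ (Sm p m).erase (lm hp m) :=
    Finset.mem_erase.mpr ⟨(lm_lt_gm hp m).ne', fib_subset_Sm p m (gm_mem_fib hp m)⟩
  have hlmem : lm hp m ∈ Sm p m := Finset.min'_mem _ _
  have hsub : ((Sm p m).erase (lm hp m)).filter (· < gm hp m) ⊆
      (((Sm p m).erase (lm hp m)).erase (gm hp m)) := by
    intro i hi
    rw [Finset.mem_filter] at hi
    exact Finset.mem_erase.mpr ⟨ne_of_lt hi.2, hi.1⟩
  have h2 := Finset.card_le_card hsub
  rw [Finset.card_erase_of_mem hgmem, Finset.card_erase_of_mem hlmem, card_Sm hp m] at h2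
  have hm := m.isLt
  unfold rank
  omega

lemma eq_of_card_filter_lt {α : Type*} [LinearOrder α] [DecidableEq α] {S : Finset α} {a b : α}
    (ha : a ∈ S) (hb : b ∈ S)
    (h : (S.filter (· < a)).card = (S.filter (· < b)).card) : a = b := by
  have key : ∀ {x y : α}, x ∈ S → y ∈ S → x < y →
      (S.filter (· < x)).card < (S.filter (· < y)).card := by
    intro x y hx hy hxy
    apply Finset.card_lt_card
    rw [Finset.ssubset_iff_of_subset]
    · exact ⟨x, Finset.mem_filter.mpr ⟨hx, hxy⟩, fun hc => lt_irrefl x (Finset.mem_filter.mp hc).2⟩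
    · intro z hz
      rw [Finset.mem_filter] at *
      exact ⟨hz.1, hz.2.trans hxy⟩
  rcases lt_trichotomy a b with hlt | he | hlt
  · exact absurd h (ne_of_lt (key ha hb hlt))
  · exact he
  · exact absurd h.symm (ne_of_lt (key hb ha hlt))

lemma Sm_subset {m : Fin k}
    (hlow : ∀ m' : Fin k, m' < m → fib p m' = fib q m') : Sm p m ⊆ Sm q m := by
  intro i hi
  simp only [Sm, mem_filter, mem_univ, true_and] at *
  by_contra hq
  have hq' : q i < m := not_le.mp hq
  have hmem : i ∈ fib q (q i) := by simp [fib]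
  rw [← hlow _ hq'] at hmem
  have hpq : p i = q i := by simpa [fib] using hmem
  exact absurd hi (not_le.mpr (hpq ▸ hq'))

lemma Sm_eq {m : Fin k}
    (hlow : ∀ m' : Fin k, m' < m → fib p m' = fib q m') : Sm p m = Sm q m :=
  Finset.Subset.antisymm (Sm_subset hlow) (Sm_subset fun m' h => (hlow m' h).symm)

lemma fib_eq_pair (hp : IsPairPartition k p) (m : Fin k) :
    fib p m = {lm hp m, gm hp m} := by
  symm
  apply Finset.eq_of_subset_of_card_le
  · intro i hi
    rcases Finset.mem_insert.mp hi with h | h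
    · exact h ▸ lm_mem_fib hp m
    · exact (Finset.mem_singleton.mp h) ▸ gm_mem_fib hp m
  · rw [show (fib p m).card = 2 from hp.1 m, Finset.card_pair (lm_lt_gm hp m).ne]

def Encode (kp : {p : Fin (2 * k) → Fin k // IsPairPartition k p}) :
    ∀ m : Fin k, Fin (2 * (k - 1 - m.val) + 1) :=
  fun m => ⟨rank kp.2 m, rank_lt kp.2 m⟩

lemma Encode_injective : Function.Injective (Encode (k := k)) := by
  rintro ⟨p, hp⟩ ⟨q, hq⟩ h
  have key : ∀ n : ℕ, ∀ m : Fin k, m.val = n → fib p m = fib q m := by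
    intro n
    induction n using Nat.strong_induction_on with
    | _ n ih =>
      intro m hm
      have hlow : ∀ m' : Fin k, m' < m → fib p m' = fib q m' :=
        fun m' h' => ih m'.val (hm ▸ h') m' rfl
      have hS : Sm p m = Sm q m := Sm_eq hlow
      have hl : lm hp m = lm hq m := by
        have h1 : lm hp m ∈ Sm q m := hS ▸ Finset.min'_mem _ _
        have h2 : lm hq m ∈ Sm p m := hS.symm ▸ Finset.min'_mem _ _
        exact le_antisymm (Finset.min'_le _ _ h2) (Finset.min'_le _ _ h1)
      have hrank : rank hp m = rank hq m := congrArg Fin.val (congrFun h m)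
      have hg : gm hp m = gm hq m := by
        have hmem1 : gm hp m ∈ (Sm p m).erase (lm hp m) :=
          Finset.mem_erase.mpr ⟨(lm_lt_gm hp m).ne', fib_subset_Sm p m (gm_mem_fib hp m)⟩
        have hmem2 : gm hq m ∈ (Sm p m).erase (lm hp m) := by
          rw [hS, hl]
          exact Finset.mem_erase.mpr ⟨(lm_lt_gm hq m).ne', fib_subset_Sm q m (gm_mem_fib hq m)⟩
        apply eq_of_card_filter_lt hmem1 hmem2
        have : rank hq m = (((Sm p m).erase (lm hp m)).filter (· < gm hq m)).card := by
          unfold rank; rw [hS, hl]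
        rw [show (((Sm p m).erase (lm hp m)).filter (· < gm hp m)).card = rank hp m from rfl,
          hrank, this]
      rw [fib_eq_pair hp m, fib_eq_pair hq m, hl, hg]
  apply Subtype.ext
  funext i
  have hi : i ∈ fib p (p i) := by simp [fib]
  rw [key (p i).val (p i) rfl] at hi
  have : q i = p i := by simpa [fib] using hi
  exact this.symm

lemma card_pairPartitions_le (k : ℕ) :
    (Finset.univ.filter (IsPairPartition k)).card ≤ ∏ i ∈ Finset.range k, (2 * i + 1) := by
  classical
  rw [← Fintype.card_subtype]
  calc Fintype.card {p : Fin (2 * k) → Fin k // IsPairPartition k p}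
      ≤ Fintype.card (∀ m : Fin k, Fin (2 * (k - 1 - m.val) + 1)) :=
        Fintype.card_le_of_injective Encode Encode_injective
    _ = ∏ m : Fin k, (2 * (k - 1 - m.val) + 1) := by simp [Fintype.card_pi]
    _ = ∏ i ∈ Finset.range k, (2 * (k - 1 - i) + 1) :=
        Fin.prod_univ_eq_prod_range (fun i => 2 * (k - 1 - i) + 1) k
    _ = ∏ i ∈ Finset.range k, (2 * i + 1) :=
        Finset.prod_range_reflect (fun i => 2 * i + 1) k

end ToeplitzAux

noncomputable def hfun (k : ℕ) : Fin (k + 1) → ℝ → ℝ :=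
  Fin.cons (Set.indicator (Set.Icc (0:ℝ) 1) 1) (fun _ => Set.indicator (Set.Icc (-1:ℝ) 1) 1)

lemma hfun_integrable (k : ℕ) (i : Fin (k + 1)) : Integrable (hfun k i) := by
  have h1 : Integrable (Set.indicator (Set.Icc (0:ℝ) 1) (1 : ℝ → ℝ)) := by
    rw [integrable_indicator_iff measurableSet_Icc]
    exact (integrableOn_const_iff).mpr (Or.inr (by simp [Real.volume_Icc]))
  have h2 : Integrable (Set.indicator (Set.Icc (-1:ℝ) 1) (1 : ℝ → ℝ)) := by
    rw [integrable_indicator_iff measurableSet_Icc]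
    exact (integrableOn_const_iff).mpr (Or.inr (by simp [Real.volume_Icc]))
  refine Fin.cases ?_ ?_ i
  · simpa [hfun] using h1
  · intro m; simpa [hfun] using h2

lemma hfun_integral (k : ℕ) :
    ∫ x : Fin (k + 1) → ℝ, ∏ i, hfun k i (x i) = 2 ^ k := by
  rw [MeasureTheory.integral_fintype_prod_volume_eq_prod, Fin.prod_univ_succ]
  have h0 : (∫ x : ℝ, hfun k 0 x) = 1 := by
    simp only [hfun, Fin.cons_zero]
    rw [integral_indicator_one measurableSet_Icc, Real.volume_real_Icc]; norm_num
  have hs : ∀ m : Fin k, (∫ x : ℝ, hfun k m.succ x) = 2 := by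
    intro m
    simp only [hfun, Fin.cons_succ]
    rw [integral_indicator_one measurableSet_Icc, Real.volume_real_Icc]; norm_num
  rw [h0, Finset.prod_congr rfl (fun m _ => hs m), Finset.prod_const]
  simp


/-- The even moments
`m_{2k}(γ_T(b)) = (2-b)^{-k} ∑_{π ∈ P₂(2k)} ∫_{[0,1]×[-1,1]^k} ∏_j I_{[0,1]}(x_0 + b ∑_{i≤j} ε_π(i) x_{π(i)}) dx`
of the limiting Toeplitz distribution satisfy `m_{2k}(γ_T(b)) ≤ (2/(2-b))^k (2k-1)!!`. -/
theorem toeplitz_moment_bound (b : ℝ) (hb : b ∈ Set.Ioc (0 : ℝ) 1) (k : ℕ) (hk : 1 ≤ k) :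
    (1 / (2 - b) ^ k) *
      ∑ p ∈ Finset.univ.filter (IsPairPartition k),
        ∫ x : Fin (k + 1) → ℝ,
          Set.indicator (Set.Icc (0 : ℝ) 1) 1 (x 0) *
          (∏ m : Fin k, Set.indicator (Set.Icc (-1 : ℝ) 1) 1 (x m.succ)) *
          ∏ j : Fin (2 * k),
            Set.indicator (Set.Icc (0 : ℝ) 1) 1
              (x 0 + b * ∑ i ∈ Finset.Iic j, epsSign k p i * x (p i).succ)
    ≤ (2 / (2 - b)) ^ k * ∏ i ∈ Finset.range k, (2 * (i : ℝ) + 1) := by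
  classical
  obtain ⟨hb0, hb1⟩ := hb
  have h2b : (0:ℝ) < 2 - b := by linarith
  have hnn : ∀ (s : Set ℝ) (t : ℝ), 0 ≤ Set.indicator s (1 : ℝ → ℝ) t :=
    fun s t => Set.indicator_nonneg (fun _ _ => zero_le_one) t
  have hle1 : ∀ (s : Set ℝ) (t : ℝ), Set.indicator s (1 : ℝ → ℝ) t ≤ 1 := by
    intro s t; by_cases h : t ∈ s <;> simp [Set.indicator_apply, h]
  have hg : ∀ x : Fin (k+1) → ℝ, (∏ i, hfun k i (x i)) =
      Set.indicator (Set.Icc (0 : ℝ) 1) (1 : ℝ → ℝ) (x 0) *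
      ∏ m : Fin k, Set.indicator (Set.Icc (-1 : ℝ) 1) (1 : ℝ → ℝ) (x m.succ) := by
    intro x
    rw [Fin.prod_univ_succ]
    simp [hfun]
  have hbound : ∀ p ∈ Finset.univ.filter (IsPairPartition k),
      (∫ x : Fin (k + 1) → ℝ,
          Set.indicator (Set.Icc (0 : ℝ) 1) (1 : ℝ → ℝ) (x 0) *
          (∏ m : Fin k, Set.indicator (Set.Icc (-1 : ℝ) 1) (1 : ℝ → ℝ) (x m.succ)) *
          ∏ j : Fin (2 * k),
            Set.indicator (Set.Icc (0 : ℝ) 1) (1 : ℝ → ℝ)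
              (x 0 + b * ∑ i ∈ Finset.Iic j, epsSign k p i * x (p i).succ))
        ≤ 2 ^ k := by
    intro p _
    calc (∫ x : Fin (k + 1) → ℝ,
          Set.indicator (Set.Icc (0 : ℝ) 1) (1 : ℝ → ℝ) (x 0) *
          (∏ m : Fin k, Set.indicator (Set.Icc (-1 : ℝ) 1) (1 : ℝ → ℝ) (x m.succ)) *
          ∏ j : Fin (2 * k),
            Set.indicator (Set.Icc (0 : ℝ) 1) (1 : ℝ → ℝ)
              (x 0 + b * ∑ i ∈ Finset.Iic j, epsSign k p i * x (p i).succ))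
        ≤ ∫ x : Fin (k+1) → ℝ, ∏ i, hfun k i (x i) := by
          apply integral_mono_of_nonneg
          · refine Filter.Eventually.of_forall fun x => ?_
            dsimp only
            refine mul_nonneg (mul_nonneg (hnn _ _) ?_) ?_ <;>
              exact Finset.prod_nonneg (fun _ _ => hnn _ _)
          · exact Integrable.fintype_prod (hfun_integrable k)
          · refine Filter.Eventually.of_forall fun x => ?_
            dsimp only
            rw [hg x]
            refine mul_le_of_le_one_right
              (mul_nonneg (hnn _ _) (Finset.prod_nonneg (fun _ _ => hnn _ _))) ?_
            exact Finset.prod_le_one (fun j _ => hnn _ _) (fun j _ => hle1 _ _)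
      _ = 2 ^ k := hfun_integral k
  set N := (Finset.univ.filter (IsPairPartition k)).card with hNdef
  have hsum : (∑ p ∈ Finset.univ.filter (IsPairPartition k),
      ∫ x : Fin (k + 1) → ℝ,
          Set.indicator (Set.Icc (0 : ℝ) 1) (1 : ℝ → ℝ) (x 0) *
          (∏ m : Fin k, Set.indicator (Set.Icc (-1 : ℝ) 1) (1 : ℝ → ℝ) (x m.succ)) *
          ∏ j : Fin (2 * k),
            Set.indicator (Set.Icc (0 : ℝ) 1) (1 : ℝ → ℝ)
              (x 0 + b * ∑ i ∈ Finset.Iic j, epsSign k p i * x (p i).succ))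
      ≤ (N : ℝ) * 2 ^ k := by
    have := Finset.sum_le_card_nsmul (Finset.univ.filter (IsPairPartition k)) _ ((2:ℝ)^k) hbound
    simpa [nsmul_eq_mul, hNdef] using this
  have hcard : (N : ℝ) ≤ ∏ i ∈ Finset.range k, (2 * (i:ℝ) + 1) := by
    calc (N : ℝ) ≤ ((∏ i ∈ Finset.range k, (2 * i + 1) : ℕ) : ℝ) :=
          Nat.cast_le.mpr (ToeplitzAux.card_pairPartitions_le k)
      _ = ∏ i ∈ Finset.range k, (2 * (i:ℝ) + 1) := by push_cast; rfl
  have hD0 : (0:ℝ) ≤ ∏ i ∈ Finset.range k, (2 * (i:ℝ) + 1) :=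
    Finset.prod_nonneg (fun i _ => by positivity)
  have hpos : (0:ℝ) ≤ 1 / (2 - b) ^ k := by positivity
  calc (1 / (2 - b) ^ k) * ∑ p ∈ Finset.univ.filter (IsPairPartition k),
        ∫ x : Fin (k + 1) → ℝ,
          Set.indicator (Set.Icc (0 : ℝ) 1) (1 : ℝ → ℝ) (x 0) *
          (∏ m : Fin k, Set.indicator (Set.Icc (-1 : ℝ) 1) (1 : ℝ → ℝ) (x m.succ)) *
          ∏ j : Fin (2 * k),
            Set.indicator (Set.Icc (0 : ℝ) 1) (1 : ℝ → ℝ)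
              (x 0 + b * ∑ i ∈ Finset.Iic j, epsSign k p i * x (p i).succ)
      ≤ (1 / (2 - b) ^ k) * ((N : ℝ) * 2 ^ k) := mul_le_mul_of_nonneg_left hsum hpos
    _ ≤ (1 / (2 - b) ^ k) * ((∏ i ∈ Finset.range k, (2 * (i:ℝ) + 1)) * 2 ^ k) :=
        mul_le_mul_of_nonneg_left (mul_le_mul_of_nonneg_right hcard (by positivity)) hpos
    _ = (2 / (2 - b)) ^ k * ∏ i ∈ Finset.range k, (2 * (i : ℝ) + 1) := by
        rw [div_pow]
        field_simp
end

section
/- For the pair partition π₁ = {{1,2},{3,4}} of {1,2,3,4}, the integral p_{π₁}(b) = ∫_{[0,1]×[−1,1]²} ∏_{j=1}^{4} I_{[0,1]}(x_0 + b Σ_{i=1}^{j} ε_{π₁}(i) x_{π₁(i)}) dx_0 dx_1 dx_2 equals (2/3)(6−5b) for b ∈ [0,1/2] and (−1+6b−2b³)/(3b²) for b ∈ (1/2,1]. -/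
open MeasureTheory

/-- Indicator function of `[0,1]`. -/
noncomputable def ind01 (t : ℝ) : ℝ := Set.indicator (Set.Icc (0 : ℝ) 1) 1 t

lemma int_sq (p q c d : ℝ) (hp : p ≠ 0) :
    ∫ x in c..d, (p*x+q)^2 = ((p*d+q)^3 - (p*c+q)^3)/(3*p) := by
  have h : ∀ x ∈ Set.uIcc c d, HasDerivAt (fun x => (p*x+q)^3/(3*p)) ((p*x+q)^2) x := by
    intro x _
    have h1 : HasDerivAt (fun x => p*x+q) p x := by
      simpa using ((hasDerivAt_id x).const_mul p).add_const q
    have h2 := (h1.pow 3).div_const (3*p)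
    refine HasDerivAt.congr_deriv h2 ?_
    field_simp
    ring
  rw [intervalIntegral.integral_eq_sub_of_hasDerivAt h
    (Continuous.intervalIntegrable (by fun_prop) c d)]
  ring

lemma inner_int (b x : ℝ) (hb : 0 < b) (hx : x ∈ Set.Icc (0:ℝ) 1) :
    ∫ z in Set.Icc (-1:ℝ) 1, ind01 (x + b*z) = min 1 (x/b) + min 1 ((1-x)/b) := by
  have hrw : ∀ z : ℝ, ind01 (x + b*z) = (Set.Icc (-(x/b)) ((1-x)/b)).indicator (fun _ => (1:ℝ)) z := by
    intro z
    unfold ind01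
    have hiff : x + b*z ∈ Set.Icc (0:ℝ) 1 ↔ z ∈ Set.Icc (-(x/b)) ((1-x)/b) := by
      simp only [Set.mem_Icc]
      constructor
      · rintro ⟨h1, h2⟩
        refine ⟨?_, ?_⟩
        · rw [show -(x/b) = (-x)/b by ring, div_le_iff₀ hb]; nlinarith
        · rw [le_div_iff₀ hb]; nlinarith
      · rintro ⟨h1, h2⟩
        rw [show -(x/b) = (-x)/b by ring, div_le_iff₀ hb] at h1
        rw [le_div_iff₀ hb] at h2
        constructor <;> nlinarith
    simp only [Set.indicator_apply, hiff, Pi.one_apply]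
  simp only [hrw]
  rw [setIntegral_indicator measurableSet_Icc]
  rw [Set.Icc_inter_Icc, setIntegral_const, smul_eq_mul, mul_one]
  have h1 : (0:ℝ) ≤ min 1 ((1-x)/b) - max (-1) (-(x/b)) := by
    have hmin : (0:ℝ) ≤ min 1 ((1-x)/b) :=
      le_min (by norm_num) (div_nonneg (by linarith [hx.2]) hb.le)
    have hmax : max (-1:ℝ) (-(x/b)) ≤ 0 :=
      max_le (by norm_num) (neg_nonpos.mpr (div_nonneg hx.1 hb.le))
    linarith
  rw [Real.volume_real_Icc_of_le (by linarith)]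
  have hmx : max (-1:ℝ) (-(x/b)) = -(min 1 (x/b)) := by
    rw [← max_neg_neg]
  rw [hmx]; ring

lemma reduce (b : ℝ) (hb : 0 < b) :
    (∫ x in Set.Icc (0 : ℝ) 1, ∫ y in Set.Icc (-1 : ℝ) 1, ∫ z in Set.Icc (-1 : ℝ) 1,
        ind01 (x + b * y) * ind01 x * ind01 (x + b * z) * ind01 x)
    = ∫ x in (0:ℝ)..1, (min 1 (x/b) + min 1 ((1-x)/b))^2 := by
  have key : ∀ x ∈ Set.Icc (0:ℝ) 1,
      (∫ y in Set.Icc (-1 : ℝ) 1, ∫ z in Set.Icc (-1 : ℝ) 1,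
        ind01 (x + b * y) * ind01 x * ind01 (x + b * z) * ind01 x)
      = (min 1 (x/b) + min 1 ((1-x)/b))^2 := by
    intro x hx
    have h01 : ind01 x = 1 := by
      unfold ind01; rw [Set.indicator_of_mem hx]; rfl
    simp only [h01, mul_one]
    have hz : ∀ y : ℝ, (∫ z in Set.Icc (-1 : ℝ) 1, ind01 (x + b * y) * ind01 (x + b * z))
        = ind01 (x + b * y) * (min 1 (x/b) + min 1 ((1-x)/b)) := by
      intro y
      rw [MeasureTheory.integral_const_mul, inner_int b x hb hx]
    simp only [hz]
    rw [MeasureTheory.integral_mul_const, inner_int b x hb hx, sq]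
  rw [setIntegral_congr_fun measurableSet_Icc key,
    integral_Icc_eq_integral_Ioc,
    ← intervalIntegral.integral_of_le (by norm_num : (0:ℝ) ≤ 1)]

lemma case1 (b : ℝ) (hb : 0 < b) (hb2 : b ≤ 1/2) :
    (∫ x in (0:ℝ)..1, (min 1 (x/b) + min 1 ((1-x)/b))^2) = 2/3*(6-5*b) := by
  set f : ℝ → ℝ := fun x => (min 1 (x/b) + min 1 ((1-x)/b))^2 with hf
  have hbne : b ≠ 0 := hb.ne'
  have hfc : Continuous f := by
    apply Continuous.pow
    exact (continuous_const.min (continuous_id.div_const b)).add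
      (continuous_const.min ((continuous_const.sub continuous_id).div_const b))
  have hint : ∀ a c : ℝ, IntervalIntegrable f volume a c := fun a c => hfc.intervalIntegrable a c
  have split1 := intervalIntegral.integral_add_adjacent_intervals (hint 0 b) (hint b 1)
  have split2 := intervalIntegral.integral_add_adjacent_intervals (hint b (1-b)) (hint (1-b) 1)
  have P1 : (∫ x in (0:ℝ)..b, f x)
      = ((1/b*b+1)^3 - (1/b*0+1)^3)/(3*(1/b)) := by
    rw [intervalIntegral.integral_congr (g := fun x => ((1/b)*x + 1)^2)
      (by
        intro x hxm
        rw [Set.uIcc_of_le hb.le] at hxm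
        obtain ⟨hx1, hx2⟩ := hxm
        simp only [hf]
        rw [min_eq_right (by rw [div_le_one hb]; linarith),
          min_eq_left (by rw [le_div_iff₀ hb]; linarith)]
        ring)]
    exact int_sq _ _ _ _ (one_div_ne_zero hbne)
  have P2 : (∫ x in b..(1-b), f x) = 4*(1-2*b) := by
    rw [intervalIntegral.integral_congr (g := fun _ => (4:ℝ))
      (by
        intro x hxm
        rw [Set.uIcc_of_le (by linarith)] at hxm
        obtain ⟨hx1, hx2⟩ := hxm
        simp only [hf]
        rw [min_eq_left (by rw [le_div_iff₀ hb]; linarith),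
          min_eq_left (by rw [le_div_iff₀ hb]; linarith)]
        norm_num)]
    rw [intervalIntegral.integral_const, smul_eq_mul]
    ring
  have P3 : (∫ x in (1-b)..1, f x)
      = ((-(1/b)*1+(1+1/b))^3 - (-(1/b)*(1-b)+(1+1/b))^3)/(3*(-(1/b))) := by
    rw [intervalIntegral.integral_congr (g := fun x => ((-(1/b))*x + (1+1/b))^2)
      (by
        intro x hxm
        rw [Set.uIcc_of_le (by linarith)] at hxm
        obtain ⟨hx1, hx2⟩ := hxm
        simp only [hf]
        rw [min_eq_left (by rw [le_div_iff₀ hb]; linarith),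
          min_eq_right (by rw [div_le_one hb]; linarith)]
        field_simp
        ring)]
    exact int_sq _ _ _ _ (by simp [hbne])
  rw [← split1, ← split2, P1, P2, P3]
  field_simp
  ring

lemma case2 (b : ℝ) (hb2 : 1/2 < b) (hb1 : b ≤ 1) :
    (∫ x in (0:ℝ)..1, (min 1 (x/b) + min 1 ((1-x)/b))^2)
      = (-1 + 6 * b - 2 * b ^ 3) / (3 * b ^ 2) := by
  have hb : 0 < b := by linarith
  set f : ℝ → ℝ := fun x => (min 1 (x/b) + min 1 ((1-x)/b))^2 with hf
  have hbne : b ≠ 0 := hb.ne'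
  have hfc : Continuous f := by
    apply Continuous.pow
    exact (continuous_const.min (continuous_id.div_const b)).add
      (continuous_const.min ((continuous_const.sub continuous_id).div_const b))
  have hint : ∀ a c : ℝ, IntervalIntegrable f volume a c := fun a c => hfc.intervalIntegrable a c
  have split1 := intervalIntegral.integral_add_adjacent_intervals (hint 0 (1-b)) (hint (1-b) 1)
  have split2 := intervalIntegral.integral_add_adjacent_intervals (hint (1-b) b) (hint b 1)
  have P1 : (∫ x in (0:ℝ)..(1-b), f x)
      = ((1/b*(1-b)+1)^3 - (1/b*0+1)^3)/(3*(1/b)) := by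
    rw [intervalIntegral.integral_congr (g := fun x => ((1/b)*x + 1)^2)
      (by
        intro x hxm
        rw [Set.uIcc_of_le (by linarith)] at hxm
        obtain ⟨hx1, hx2⟩ := hxm
        simp only [hf]
        rw [min_eq_right (by rw [div_le_one hb]; linarith),
          min_eq_left (by rw [le_div_iff₀ hb]; linarith)]
        ring)]
    exact int_sq _ _ _ _ (one_div_ne_zero hbne)
  have P2 : (∫ x in (1-b)..b, f x) = (2*b-1) * (1/b)^2 := by
    rw [intervalIntegral.integral_congr (g := fun _ => ((1/b)^2 : ℝ))
      (by
        intro x hxm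
        rw [Set.uIcc_of_le (by linarith)] at hxm
        obtain ⟨hx1, hx2⟩ := hxm
        simp only [hf]
        rw [min_eq_right (by rw [div_le_one hb]; linarith),
          min_eq_right (by rw [div_le_one hb]; linarith)]
        rw [← add_div]
        norm_num)]
    rw [intervalIntegral.integral_const, smul_eq_mul]
    ring
  have P3 : (∫ x in b..1, f x)
      = ((-(1/b)*1+(1+1/b))^3 - (-(1/b)*b+(1+1/b))^3)/(3*(-(1/b))) := by
    rw [intervalIntegral.integral_congr (g := fun x => ((-(1/b))*x + (1+1/b))^2)
      (by
        intro x hxm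
        rw [Set.uIcc_of_le (by linarith)] at hxm
        obtain ⟨hx1, hx2⟩ := hxm
        simp only [hf]
        rw [min_eq_left (by rw [le_div_iff₀ hb]; linarith),
          min_eq_right (by rw [div_le_one hb]; linarith)]
        field_simp
        ring)]
    exact int_sq _ _ _ _ (by simp [hbne])
  rw [← split1, ← split2, P1, P2, P3]
  field_simp
  ring

/-- For the pair partition `π₁ = {{1,2},{3,4}}`, the integral
`p_{π₁}(b) = ∫_{[0,1]×[-1,1]²} I_{[0,1]}(x₀+bx₁) I_{[0,1]}(x₀) I_{[0,1]}(x₀+bx₂) I_{[0,1]}(x₀)`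
equals `(2/3)(6-5b)` for `b ∈ [0,1/2]` and `(-1+6b-2b³)/(3b²)` for `b ∈ (1/2,1]`. -/
theorem p_pi1_eval (b : ℝ) :
    (b ∈ Set.Icc (0 : ℝ) (1 / 2) →
      (∫ x in Set.Icc (0 : ℝ) 1, ∫ y in Set.Icc (-1 : ℝ) 1, ∫ z in Set.Icc (-1 : ℝ) 1,
        ind01 (x + b * y) * ind01 x * ind01 (x + b * z) * ind01 x)
        = 2 / 3 * (6 - 5 * b)) ∧
    (b ∈ Set.Ioc (1 / 2 : ℝ) 1 →
      (∫ x in Set.Icc (0 : ℝ) 1, ∫ y in Set.Icc (-1 : ℝ) 1, ∫ z in Set.Icc (-1 : ℝ) 1,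
        ind01 (x + b * y) * ind01 x * ind01 (x + b * z) * ind01 x)
        = (-1 + 6 * b - 2 * b ^ 3) / (3 * b ^ 2)) := by
  constructor
  · rintro ⟨hb0, hb2⟩
    rcases eq_or_lt_of_le hb0 with hb | hb
    · -- b = 0
      subst hb
      have key : ∀ x ∈ Set.Icc (0:ℝ) 1,
          (∫ y in Set.Icc (-1 : ℝ) 1, ∫ z in Set.Icc (-1 : ℝ) 1,
            ind01 (x + 0 * y) * ind01 x * ind01 (x + 0 * z) * ind01 x) = 4 := by
        intro x hx
        have h01 : ind01 x = 1 := by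
          unfold ind01; rw [Set.indicator_of_mem hx]; rfl
        simp only [zero_mul, add_zero, h01, mul_one, one_mul]
        simp [Real.volume_Icc]
        norm_num
      rw [setIntegral_congr_fun measurableSet_Icc key]
      simp [Real.volume_Icc]
      norm_num
    · rw [reduce b hb]
      exact case1 b hb hb2
  · rintro ⟨hb2, hb1⟩
    rw [reduce b (by linarith)]
    exact case2 b hb2 hb1
end
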